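/- arXiv:1707.00121 — 2 statements merged into one kernel-verified Lean document; each statement's English description precedes it below -/
import Mathlib

section
/- Let $y : [0,T] \to \mathbb{R}$ be a $C^2$ function satisfying $y''(t) + y'(t) \ge y(t) + c\, y(t)^2$ for all $t \in [0,T]$ in its interval of existence, where $c > 0$. Then there exists $M = M(c) > 0$ such that if $y(0) \ge M$ and $y'(0) \ge M$, then $y$ cannot be extended as a $C^2$ solution to all of $[0, \infty)$; i.e., $y$ blows up in finite time (there exists $t^* < \infty$ with $\lim_{t \to t^{*-}} y(t) = +\infty$). -/
/-! With `c * A = 8`, the profile `φ t = A / (1 - t) ^ 2` satisfies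
`φ'' + φ' = 6A/(1-t)^4 + 2A/(1-t)^3 ≤ c φ²` on `[0, 1)`, so it is a subsolution. Since
`u ↦ u + c u²` is increasing on `[0, ∞)`, the difference `w = y - φ` satisfies `w'' + w' ≥ 0`
as long as `w ≥ 0`; then `(exp t * w')' ≥ 0`, so `w'` stays positive and `w` stays nonnegative.
Hence `y ≥ φ → ∞` as `t → 1⁻`, which contradicts the continuity of `y` at `1`. -/

open Set Filter Topology Real

lemma monotoneOn_of_hasDerivAt_nonneg_interior {D : Set ℝ} (hD : Convex ℝ D) {f f' : ℝ → ℝ}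
    (hf : ∀ x ∈ D, HasDerivAt f (f' x) x) (hf'₀ : ∀ x ∈ interior D, 0 ≤ f' x) :
    MonotoneOn f D :=
  monotoneOn_of_hasDerivWithinAt_nonneg hD
    (fun x hx => (hf x hx).continuousAt.continuousWithinAt)
    (fun x hx => (hf x (interior_subset hx)).hasDerivWithinAt) hf'₀

lemma exists_first_nonpos {g : ℝ → ℝ} {a b : ℝ} (hab : a ≤ b) (hg : ContinuousOn g (Icc a b))
    (ha : 0 < g a) (hb : g b ≤ 0) : ∃ c ∈ Ioc a b, g c ≤ 0 ∧ ∀ s ∈ Ico a c, 0 < g s := by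
  set S := Icc a b ∩ g ⁻¹' Iic 0
  have hS : IsClosed S := hg.preimage_isClosed_of_isClosed isClosed_Icc isClosed_Iic
  have hSbdd : BddBelow S := ⟨a, fun x hx => hx.1.1⟩
  obtain ⟨⟨hac, hcb⟩, hgc⟩ := hS.csInf_mem ⟨b, ⟨hab, le_rfl⟩, hb⟩ hSbdd
  refine ⟨sInf S, ⟨hac.lt_of_ne ?_, hcb⟩, hgc, fun s hs => ?_⟩
  · rintro h
    rw [← h] at hgc
    exact hgc.not_gt ha
  · by_contra! hgs
    exact (csInf_le hSbdd ⟨⟨hs.1, hs.2.le.trans hcb⟩, hgs⟩).not_gt hs.2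

theorem nonneg_of_deriv_add_deriv_nonneg {w w' w'' : ℝ → ℝ} {a b : ℝ}
    (hw : ∀ t ∈ Ico a b, HasDerivAt w (w' t) t) (hw' : ∀ t ∈ Ico a b, HasDerivAt w' (w'' t) t)
    (ha : 0 ≤ w a) (ha' : 0 < w' a) (hineq : ∀ t ∈ Ico a b, 0 ≤ w t → 0 ≤ w'' t + w' t) :
    ∀ t ∈ Ico a b, 0 ≤ w t := by
  have nonneg_of_deriv_pos : ∀ T ∈ Ico a b, (∀ s ∈ Ico a T, 0 < w' s) →
      ∀ t ∈ Icc a T, 0 ≤ w t := by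
    intro T hT hpos t ht
    have hsub : Icc a T ⊆ Ico a b := Icc_subset_Ico_right hT.2
    have hmono : MonotoneOn w (Icc a T) :=
      monotoneOn_of_hasDerivAt_nonneg_interior (convex_Icc a T) (fun x hx => hw x (hsub hx))
        (by rw [interior_Icc]; exact fun x hx => (hpos x (Ioo_subset_Ico_self hx)).le)
    exact ha.trans (hmono (left_mem_Icc.2 (ht.1.trans ht.2)) ht ht.1)
  have hpos : ∀ t ∈ Ico a b, 0 < w' t := by
    by_contra! ⟨t₁, ht₁, hneg⟩
    obtain ⟨t₀, ht₀, hw't₀, hpos⟩ := exists_first_nonpos ht₁.1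
      (fun t ht => (hw' t ⟨ht.1, ht.2.trans_lt ht₁.2⟩).continuousAt.continuousWithinAt)
      ha' hneg
    have hsub : Icc a t₀ ⊆ Ico a b := Icc_subset_Ico_right (ht₀.2.trans_lt ht₁.2)
    have hw_nonneg := nonneg_of_deriv_pos t₀ (hsub (right_mem_Icc.2 ht₀.1.le)) hpos
    have hmono : MonotoneOn (fun t => exp t * w' t) (Icc a t₀) :=
      monotoneOn_of_hasDerivAt_nonneg_interior (convex_Icc a t₀)
        (fun t ht => (hasDerivAt_exp t).mul (hw' t (hsub ht)))
        (by
          rw [interior_Icc]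
          intro t ht
          have := hineq t (hsub (Ioo_subset_Icc_self ht)) (hw_nonneg t (Ioo_subset_Icc_self ht))
          nlinarith [exp_pos t])
    have := hmono (left_mem_Icc.2 ht₀.1.le) (right_mem_Icc.2 ht₀.1.le) ht₀.1.le
    nlinarith [exp_pos a, exp_pos t₀]
  intro t ht
  exact nonneg_of_deriv_pos t ht (fun s hs => hpos s ⟨hs.1, hs.2.trans ht.2⟩) t
    (right_mem_Icc.2 ht.1)

lemma hasDerivAt_div_one_sub_pow (A : ℝ) (n : ℕ) {t : ℝ} (ht : t ≠ 1) :
    HasDerivAt (fun s => A / (1 - s) ^ n) (n * A / (1 - t) ^ (n + 1)) t := by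
  have hu : 1 - t ≠ 0 := sub_ne_zero.2 ht.symm
  refine ((hasDerivAt_const t A).fun_div (((hasDerivAt_id' t).const_sub 1).fun_pow n)
    (pow_ne_zero n hu)).congr_deriv ?_
  rcases n with _ | m
  · simp
  · rw [Nat.add_sub_cancel]
    field_simp
    ring

lemma tendsto_div_one_sub_sq_atTop {A : ℝ} (hA : 0 < A) :
    Tendsto (fun t => A / (1 - t) ^ 2) (𝓝[<] 1) atTop := by
  have h : Tendsto (fun t : ℝ => 1 - t) (𝓝[<] 1) (𝓝[>] 0) := by
    refine tendsto_nhdsWithin_of_tendsto_nhds_of_eventually_within _ ?_ ?_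
    · have : Tendsto (fun t : ℝ => 1 - t) (𝓝 1) (𝓝 (1 - 1)) := tendsto_const_nhds.sub tendsto_id
      simpa using this.mono_left nhdsWithin_le_nhds
    · filter_upwards [self_mem_nhdsWithin] with t ht
      exact sub_pos.2 (mem_Iio.1 ht)
  simpa [div_eq_mul_inv, inv_pow] using
    (((tendsto_pow_atTop two_ne_zero).comp (tendsto_inv_nhdsGT_zero.comp h)).const_mul_atTop hA)

lemma inverse_square_subsolution {c A u : ℝ} (hA : 0 ≤ A) (hcA : c * A = 8) (hu : 0 < u)
    (hu1 : u ≤ 1) : 6 * A / u ^ 4 + 2 * A / u ^ 3 ≤ A / u ^ 2 + c * (A / u ^ 2) ^ 2 := by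
  have hcA' : c * (A / u ^ 2) ^ 2 = 8 * A / u ^ 4 := by
    field_simp
    linear_combination A * hcA
  have h3 : 2 * A / u ^ 3 ≤ 2 * A / u ^ 4 :=
    div_le_div_of_nonneg_left (by positivity) (by positivity)
      (pow_le_pow_of_le_one hu.le hu1 (by norm_num))
  have : 0 ≤ A / u ^ 2 := by positivity
  rw [hcA']
  linarith [show 6 * A / u ^ 4 + 2 * A / u ^ 4 = 8 * A / u ^ 4 by ring]

theorem div_one_sub_sq_le_of_deriv_deriv_add_deriv_ge {c A : ℝ} (hA : 0 < A) (hcA : c * A = 8)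
    {y : ℝ → ℝ} (hy : ContDiff ℝ 2 y)
    (hineq : ∀ t, 0 ≤ t → deriv (deriv y) t + deriv y t ≥ y t + c * y t ^ 2)
    (hy0 : A ≤ y 0) (hy'0 : 2 * A < deriv y 0) :
    ∀ t ∈ Ico (0 : ℝ) 1, A / (1 - t) ^ 2 ≤ y t := by
  have hc : 0 ≤ c := by nlinarith
  have hφ (t : ℝ) (ht : t ∈ Ico (0 : ℝ) 1) :
      HasDerivAt (fun s => A / (1 - s) ^ 2) (2 * A / (1 - t) ^ 3) t := by
    simpa using hasDerivAt_div_one_sub_pow A 2 ht.2.ne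
  have hφ' (t : ℝ) (ht : t ∈ Ico (0 : ℝ) 1) :
      HasDerivAt (fun s => 2 * A / (1 - s) ^ 3) (6 * A / (1 - t) ^ 4) t := by
    convert hasDerivAt_div_one_sub_pow (2 * A) 3 ht.2.ne using 1
    norm_num
    ring
  have hw := nonneg_of_deriv_add_deriv_nonneg (w := fun t => y t - A / (1 - t) ^ 2)
    (w' := fun t => deriv y t - 2 * A / (1 - t) ^ 3)
    (w'' := fun t => deriv (deriv y) t - 6 * A / (1 - t) ^ 4)
    (fun t ht => (hy.differentiable two_ne_zero t).hasDerivAt.sub (hφ t ht))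
    (fun t ht => (hy.differentiable_deriv_two t).hasDerivAt.sub (hφ' t ht))
    (by simpa using hy0) (by norm_num; linarith) ?_
  · exact fun t ht => sub_nonneg.1 (hw t ht)
  · intro t ht hwt
    have hφy : A / (1 - t) ^ 2 ≤ y t := sub_nonneg.1 hwt
    have hsub := inverse_square_subsolution hA.le hcA (sub_pos.2 ht.2) (by linarith [ht.1])
    have hsq : c * (A / (1 - t) ^ 2) ^ 2 ≤ c * y t ^ 2 :=
      mul_le_mul_of_nonneg_left (pow_le_pow_left₀ (by positivity) hφy 2) hc
    linarith [hineq t ht.1]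

/-- Blow-up for the differential inequality `y'' + y' ≥ y + c y²`:
for large enough initial data no global `C²` solution on `[0,∞)` exists. -/
theorem stmt1 (c : ℝ) (hc : 0 < c) :
    ∃ M : ℝ, 0 < M ∧
      ∀ y : ℝ → ℝ, ContDiff ℝ 2 y →
        (∀ t : ℝ, 0 ≤ t →
          deriv (deriv y) t + deriv y t ≥ y t + c * y t ^ 2) →
        y 0 ≥ M → deriv y 0 ≥ M → False := by
  set A := 8 / c
  have hA : 0 < A := by positivity
  refine ⟨3 * A, by positivity, fun y hy hineq hy0 hy'0 => ?_⟩
  have hlower := div_one_sub_sq_le_of_deriv_deriv_add_deriv_ge hA (mul_div_cancel₀ 8 hc.ne')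
    hy hineq (by linarith) (by linarith)
  have hy_top : Tendsto y (𝓝[<] 1) atTop := by
    refine tendsto_atTop_mono' _ ?_ (tendsto_div_one_sub_sq_atTop hA)
    filter_upwards [Ioo_mem_nhdsLT zero_lt_one] with t ht
    exact hlower t (Ioo_subset_Ico_self ht)
  exact not_tendsto_atTop_of_tendsto_nhds
    (hy.continuous.tendsto 1 |>.mono_left nhdsWithin_le_nhds) hy_top
end

section
/- Let $u : [0,T] \times \mathbb{R} \to \mathbb{R}$ be a $C^2$ solution of the hyperbolic Burgers equation $\partial_t^2 u + \partial_t u + 2u\,\partial_x u = \partial_x^2 u$ on the backward light cone $K = \{(t,x) : 0 \le t \le R,\ |x| \le R - t\}$. Define $e(t) := \int_{-(R-t)}^{R-t} \left( (\partial_t u(t,x))^2 + (\partial_x u(t,x))^2 \right) dx$. Then $e'(t) \le 2 \|u(t,\cdot)\|_{L^\infty([-(R-t),R-t])}\, e(t)$ for $0 \le t < R$. In particular, if $u(0,\cdot) = \partial_t u(0,\cdot) = 0$ on $[-R, R]$, then $u \equiv 0$ on $K$. -/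
/-!
For `ρ = (∂ₜu)² + (∂ₓu)²`, the equation and `∂ₜ∂ₓu = ∂ₓ∂ₜu` give
`∂ₜρ = ∂ₓ(2 ∂ₜu ∂ₓu) - 2 (∂ₜu)² - 4 u ∂ₜu ∂ₓu`. Differentiating `e(t) = ∫_{|x| ≤ R - t} ρ`, whose
domain shrinks at unit speed, the flux term and the moving endpoints combine into
`-(∂ₜu ∓ ∂ₓu)² ≤ 0` at `x = ±(R - t)`, while the source term is at most `2 ‖u(t)‖_∞ e(t)`.
With zero data `e(0) = 0`, so Grönwall gives `e ≡ 0`; hence `∂ₜu = 0` in the cone and `u`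
keeps its initial value `0`.
-/

open MeasureTheory Set Function Topology

noncomputable def partialT (u : ℝ → ℝ → ℝ) (t x : ℝ) : ℝ := deriv (fun s => u s x) t

noncomputable def partialX (u : ℝ → ℝ → ℝ) (t x : ℝ) : ℝ := deriv (u t) x

section PartialDerivatives

variable {u : ℝ → ℝ → ℝ} {t x : ℝ}

theorem hasDerivAt_fderiv_apply_fst (hu : DifferentiableAt ℝ (uncurry u) (t, x)) :
    HasDerivAt (fun s => u s x) (fderiv ℝ (uncurry u) (t, x) (1, 0)) t :=
  hu.hasFDerivAt.comp_hasDerivAt (f := fun s => (s, x)) t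
    ((hasDerivAt_id' t).prodMk (hasDerivAt_const t x))

theorem hasDerivAt_fderiv_apply_snd (hu : DifferentiableAt ℝ (uncurry u) (t, x)) :
    HasDerivAt (u t) (fderiv ℝ (uncurry u) (t, x) (0, 1)) x :=
  hu.hasFDerivAt.comp_hasDerivAt (f := fun y => (t, y)) x
    ((hasDerivAt_const x t).prodMk (hasDerivAt_id' x))

theorem partialT_eq_fderiv (hu : DifferentiableAt ℝ (uncurry u) (t, x)) :
    partialT u t x = fderiv ℝ (uncurry u) (t, x) (1, 0) :=
  (hasDerivAt_fderiv_apply_fst hu).deriv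

theorem partialX_eq_fderiv (hu : DifferentiableAt ℝ (uncurry u) (t, x)) :
    partialX u t x = fderiv ℝ (uncurry u) (t, x) (0, 1) :=
  (hasDerivAt_fderiv_apply_snd hu).deriv

theorem hasDerivAt_partialT (hu : DifferentiableAt ℝ (uncurry u) (t, x)) :
    HasDerivAt (fun s => u s x) (partialT u t x) t :=
  partialT_eq_fderiv hu ▸ hasDerivAt_fderiv_apply_fst hu

theorem hasDerivAt_partialX (hu : DifferentiableAt ℝ (uncurry u) (t, x)) :
    HasDerivAt (u t) (partialX u t x) x :=
  partialX_eq_fderiv hu ▸ hasDerivAt_fderiv_apply_snd hu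

variable {m n : WithTop ℕ∞}

theorem ContDiff.uncurry_partialT (hu : ContDiff ℝ n (uncurry u)) (hmn : m + 1 ≤ n) :
    ContDiff ℝ m (uncurry (partialT u)) := by
  have hdiff := (hu.of_le (le_add_self.trans hmn)).differentiable_one
  have : uncurry (partialT u) = fun z => fderiv ℝ (uncurry u) z (1, 0) :=
    funext fun z => partialT_eq_fderiv (hdiff z)
  rw [this]
  exact (hu.fderiv_right hmn).clm_apply contDiff_const

theorem ContDiff.uncurry_partialX (hu : ContDiff ℝ n (uncurry u)) (hmn : m + 1 ≤ n) :
    ContDiff ℝ m (uncurry (partialX u)) := by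
  have hdiff := (hu.of_le (le_add_self.trans hmn)).differentiable_one
  have : uncurry (partialX u) = fun z => fderiv ℝ (uncurry u) z (0, 1) :=
    funext fun z => partialX_eq_fderiv (hdiff z)
  rw [this]
  exact (hu.fderiv_right hmn).clm_apply contDiff_const

theorem partialT_partialX (hu : ContDiff ℝ 2 (uncurry u)) (t x : ℝ) :
    partialT (partialX u) t x = partialX (partialT u) t x := by
  have hdiff := hu.differentiable two_ne_zero
  have hD : Differentiable ℝ (fderiv ℝ (uncurry u)) :=
    (hu.fderiv_right (m := 1) le_rfl).differentiable one_ne_zero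
  have hX : uncurry (partialX u) = fun z => fderiv ℝ (uncurry u) z (0, 1) :=
    funext fun z => partialX_eq_fderiv (hdiff z)
  have hT : uncurry (partialT u) = fun z => fderiv ℝ (uncurry u) z (1, 0) :=
    funext fun z => partialT_eq_fderiv (hdiff z)
  rw [partialT_eq_fderiv ((hu.uncurry_partialX (m := 1) le_rfl).differentiable one_ne_zero _),
    partialX_eq_fderiv ((hu.uncurry_partialT (m := 1) le_rfl).differentiable one_ne_zero _),
    hX, hT, fderiv_clm_apply (hD _) (differentiableAt_const _),
    fderiv_clm_apply (hD _) (differentiableAt_const _)]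
  simpa using (hu.contDiffAt.isSymmSndFDerivAt (by simp)) (1, 0) (0, 1)

theorem hasDerivAt_along_curve {φ : ℝ → ℝ} {φ' : ℝ} (hu : DifferentiableAt ℝ (uncurry u) (t, φ t))
    (hφ : HasDerivAt φ φ' t) :
    HasDerivAt (fun s => u s (φ s)) (partialT u t (φ t) + φ' * partialX u t (φ t)) t := by
  have h := hu.hasFDerivAt.comp_hasDerivAt (f := fun s => (s, φ s)) t
    ((hasDerivAt_id' t).prodMk hφ)
  have hv : ((1 : ℝ), φ') = (1, 0) + φ' • (0, 1) := by simp
  rwa [hv, map_add, map_smul, smul_eq_mul, ← partialT_eq_fderiv hu,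
    ← partialX_eq_fderiv hu] at h

end PartialDerivatives

theorem hasDerivAt_intervalIntegral_of_continuous {F F' : ℝ → ℝ → ℝ}
    (hF : Continuous (uncurry F)) (hF' : Continuous (uncurry F'))
    (hderiv : ∀ t y, HasDerivAt (F · y) (F' t y) t) (a b t₀ : ℝ) :
    HasDerivAt (fun t => ∫ y in a..b, F t y) (∫ y in a..b, F' t₀ y) t₀ := by
  obtain ⟨C, hC⟩ := ((isCompact_closedBall t₀ 1).prod
    (isCompact_uIcc (a := a) (b := b))).exists_bound_of_continuousOn hF'.continuousOn
  refine (intervalIntegral.hasDerivAt_integral_of_dominated_loc_of_deriv_le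
    (bound := fun _ => C) (Metric.closedBall_mem_nhds t₀ one_pos)
    (.of_forall fun t => (hF.uncurry_left t).aestronglyMeasurable)
    ((hF.uncurry_left t₀).intervalIntegrable _ _)
    (hF'.uncurry_left t₀).aestronglyMeasurable
    (.of_forall fun y hy t ht => hC (t, y) ⟨ht, uIoc_subset_uIcc hy⟩)
    intervalIntegrable_const
    (.of_forall fun y _ t _ => hderiv t y)).2

theorem intervalIntegral.integral_neg_to_eq_mul (f : ℝ → ℝ) (c : ℝ) :
    ∫ x in -c..c, f x = c * ∫ y in (-1)..1, f (c * y) := by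
  simp

theorem mul_integral_neg_mul_partialX_comp_mul {g : ℝ → ℝ → ℝ} (hg : ContDiff ℝ 1 (uncurry g))
    (t c : ℝ) :
    c * ∫ y in (-1)..1, -y * partialX g t (c * y) =
      -g t c - g t (-c) + ∫ y in (-1)..1, g t (c * y) := by
  have hXc : Continuous fun y => partialX g t (c * y) :=
    ((hg.uncurry_partialX (m := 0) le_rfl).continuous.uncurry_left t).comp (by fun_prop)
  have hv : ∀ y, HasDerivAt (fun y => g t (c * y)) (partialX g t (c * y) * c) y := fun y => by
    have h := (hasDerivAt_partialX (hg.differentiable_one (t, c * y))).comp y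
      ((hasDerivAt_id' y).const_mul c)
    rwa [mul_one] at h
  rw [← intervalIntegral.integral_const_mul]
  calc ∫ y in (-1)..1, c * (-y * partialX g t (c * y))
      = ∫ y in (-1)..1, -y * (partialX g t (c * y) * c) := by congr 1; ext y; ring
    _ = -1 * g t (c * 1) - -(-1) * g t (c * -1) - ∫ y in (-1)..1, -1 * g t (c * y) :=
        intervalIntegral.integral_mul_deriv_eq_deriv_mul (fun y _ => (hasDerivAt_id' y).neg)
          (fun y _ => hv y) intervalIntegrable_const
          ((hXc.mul continuous_const).intervalIntegrable _ _)
    _ = -g t c - g t (-c) + ∫ y in (-1)..1, g t (c * y) := by simp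

-- Substituting `x = (R - s) y` moves the endpoints into the integrand; integrating the resulting
-- term `-y ∂ₓg(s, (R - s) y)` by parts in `y` produces the two boundary values.
theorem hasDerivAt_integral_cone {g : ℝ → ℝ → ℝ} (hg : ContDiff ℝ 1 (uncurry g)) (R t : ℝ) :
    HasDerivAt (fun s => ∫ x in -(R - s)..R - s, g s x)
      ((∫ x in -(R - t)..R - t, partialT g t x) - g t (R - t) - g t (-(R - t))) t := by
  have hdiff := hg.differentiable_one
  have hgc : Continuous (uncurry g) := hg.continuous
  have hTc : Continuous (uncurry (partialT g)) :=
    (hg.uncurry_partialT (m := 0) le_rfl).continuous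
  have hXc : Continuous (uncurry (partialX g)) :=
    (hg.uncurry_partialX (m := 0) le_rfl).continuous
  have hline : Continuous fun p : ℝ × ℝ => (p.1, (R - p.1) * p.2) := by fun_prop
  have hI := hasDerivAt_intervalIntegral_of_continuous (a := -1) (b := 1) (t₀ := t)
    (F := fun s y => g s ((R - s) * y))
    (F' := fun s y => partialT g s ((R - s) * y) + -y * partialX g s ((R - s) * y))
    (hgc.comp hline) ((hTc.comp hline).add (continuous_snd.neg.mul (hXc.comp hline)))
    (fun s y => hasDerivAt_along_curve (hdiff _)
      (by simpa using ((hasDerivAt_const s R).sub (hasDerivAt_id' s)).mul_const y))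
  have hE := ((hasDerivAt_id' t).const_sub R).fun_mul hI
  have hrescale : (fun s => ∫ x in -(R - s)..R - s, g s x) =
      fun s => (R - s) * ∫ y in (-1)..1, g s ((R - s) * y) :=
    funext fun s => intervalIntegral.integral_neg_to_eq_mul (g s) _
  rw [hrescale]
  refine hE.congr_deriv ?_
  set c := R - t
  have hTc' : Continuous fun y => partialT g t (c * y) := (hTc.uncurry_left t).comp (by fun_prop)
  have hXc' : Continuous fun y => partialX g t (c * y) := (hXc.uncurry_left t).comp (by fun_prop)
  rw [intervalIntegral.integral_add (hTc'.intervalIntegrable _ _)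
    ((by fun_prop : Continuous fun y => -y * partialX g t (c * y)).intervalIntegrable _ _),
    mul_add, mul_integral_neg_mul_partialX_comp_mul hg t c, intervalIntegral.integral_neg_to_eq_mul (partialT g t)]
  ring

theorem nonpos_of_deriv_right_le_mul_self {f f' : ℝ → ℝ} {K a b : ℝ}
    (hf : ContinuousOn f (Icc a b)) (hf' : ∀ x ∈ Ico a b, HasDerivWithinAt f (f' x) (Ici x) x)
    (ha : f a ≤ 0) (bound : ∀ x ∈ Ico a b, f' x ≤ K * f x) : ∀ x ∈ Icc a b, f x ≤ 0 :=
  fun x hx => (le_gronwallBound_of_liminf_deriv_right_le hf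
    (fun x hx _ hr => (hf' x hx).liminf_right_slope_le hr) ha (by simpa using bound) x hx).trans_eq
    (gronwallBound_ε0_δ0 _ _)

theorem intervalIntegral.eq_zero_of_integral_eq_zero {f : ℝ → ℝ} {a b : ℝ} (hab : a < b)
    (hf : ContinuousOn f (Icc a b)) (hnn : ∀ x ∈ Icc a b, 0 ≤ f x)
    (h0 : ∫ x in a..b, f x = 0) : ∀ x ∈ Icc a b, f x = 0 := by
  by_contra! ⟨c, hc, hfc⟩
  exact (intervalIntegral.integral_pos hab hf (fun x hx => hnn x (Ioc_subset_Icc_self hx))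
    ⟨c, hc, (hnn c hc).lt_of_ne' hfc⟩).ne' h0

theorem HasDerivAt.eq_zero_of_eqOn_zero {f : ℝ → ℝ} {f' a b x : ℝ} (hab : a < b)
    (hf : HasDerivAt f f' x) (h0 : EqOn f 0 (Icc a b)) (hx : x ∈ Icc a b) : f' = 0 :=
  (uniqueDiffOn_Icc hab x hx).eq_deriv _ hf.hasDerivWithinAt
    ((hasDerivWithinAt_const x _ 0).congr h0 (h0 hx))

section HyperbolicBurgers

def HyperbolicBurgersAt (u : ℝ → ℝ → ℝ) (t x : ℝ) : Prop :=
  partialT (partialT u) t x + partialT u t x + 2 * u t x * partialX u t x =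
    partialX (partialX u) t x

noncomputable def energyDensity (u : ℝ → ℝ → ℝ) (t x : ℝ) : ℝ :=
  partialT u t x ^ 2 + partialX u t x ^ 2

noncomputable def coneEnergy (u : ℝ → ℝ → ℝ) (R t : ℝ) : ℝ :=
  ∫ x in -(R - t)..R - t, energyDensity u t x

variable {u : ℝ → ℝ → ℝ} {R t M : ℝ}

theorem energyDensity_nonneg (t x : ℝ) : 0 ≤ energyDensity u t x := by
  unfold energyDensity; positivity

theorem ContDiff.uncurry_energyDensity (hu : ContDiff ℝ 2 (uncurry u)) :
    ContDiff ℝ 1 (uncurry (energyDensity u)) :=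
  ((hu.uncurry_partialT le_rfl).pow 2).add ((hu.uncurry_partialX le_rfl).pow 2)

theorem partialT_energyDensity (hu : ContDiff ℝ 2 (uncurry u)) (t x : ℝ) :
    partialT (energyDensity u) t x =
      2 * partialT u t x * partialT (partialT u) t x +
        2 * partialX u t x * partialX (partialT u) t x := by
  have hT := (hu.uncurry_partialT (m := 1) le_rfl).differentiable one_ne_zero
  have hX := (hu.uncurry_partialX (m := 1) le_rfl).differentiable one_ne_zero
  rw [← partialT_partialX hu]
  refine ((((hasDerivAt_partialT (hT (t, x))).pow 2).add
    ((hasDerivAt_partialT (hX (t, x))).pow 2)).deriv).trans ?_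
  ring

theorem hasDerivAt_coneEnergy (hu : ContDiff ℝ 2 (uncurry u)) (R t : ℝ) :
    HasDerivAt (coneEnergy u R)
      ((∫ x in -(R - t)..R - t, partialT (energyDensity u) t x) -
        energyDensity u t (R - t) - energyDensity u t (-(R - t))) t :=
  hasDerivAt_integral_cone hu.uncurry_energyDensity R t

theorem integral_partialT_energyDensity (hu : ContDiff ℝ 2 (uncurry u)) (ht : t ≤ R)
    (hpde : ∀ x, |x| ≤ R - t → HyperbolicBurgersAt u t x) :
    ∫ x in -(R - t)..R - t, partialT (energyDensity u) t x =
      2 * partialT u t (R - t) * partialX u t (R - t) -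
        2 * partialT u t (-(R - t)) * partialX u t (-(R - t)) -
        ∫ x in -(R - t)..R - t,
          (2 * partialT u t x ^ 2 + 4 * u t x * partialT u t x * partialX u t x) := by
  have hT := hu.uncurry_partialT (m := 1) le_rfl
  have hX := hu.uncurry_partialX (m := 1) le_rfl
  have hu0 := (hu.continuous.uncurry_left t)
  have hT0 := (hT.continuous.uncurry_left t)
  have hX0 := (hX.continuous.uncurry_left t)
  have hTX0 := ((hT.uncurry_partialX (m := 0) le_rfl).continuous.uncurry_left t)
  have hXX0 := ((hX.uncurry_partialX (m := 0) le_rfl).continuous.uncurry_left t)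
  have hflux : ∀ x, HasDerivAt (fun y => 2 * partialT u t y * partialX u t y)
      (2 * partialX (partialT u) t x * partialX u t x +
        2 * partialT u t x * partialX (partialX u) t x) x := fun x =>
    ((hasDerivAt_partialX (hT.differentiable one_ne_zero _)).const_mul 2).mul
      (hasDerivAt_partialX (hX.differentiable one_ne_zero _))
  have hpt : ∀ x ∈ uIcc (-(R - t)) (R - t), partialT (energyDensity u) t x =
      (2 * partialX (partialT u) t x * partialX u t x +
        2 * partialT u t x * partialX (partialX u) t x) -
      (2 * partialT u t x ^ 2 + 4 * u t x * partialT u t x * partialX u t x) := by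
    intro x hx
    rw [uIcc_of_le (by linarith)] at hx
    have hx' : HyperbolicBurgersAt u t x := hpde x (abs_le.2 hx)
    unfold HyperbolicBurgersAt at hx'
    rw [partialT_energyDensity hu]
    linear_combination (2 * partialT u t x) * hx'
  rw [intervalIntegral.integral_congr hpt, intervalIntegral.integral_sub
    ((by fun_prop : Continuous _).intervalIntegrable _ _)
    ((by fun_prop : Continuous _).intervalIntegrable _ _),
    intervalIntegral.integral_eq_sub_of_hasDerivAt (fun x _ => hflux x)
      ((by fun_prop : Continuous _).intervalIntegrable _ _)]

theorem neg_two_mul_sq_add_four_mul_le {w a b M : ℝ} (hw : |w| ≤ M) :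
    -(2 * a ^ 2 + 4 * w * a * b) ≤ 2 * M * (a ^ 2 + b ^ 2) := by
  obtain ⟨hlo, hhi⟩ := abs_le.1 hw
  -- `(M + w) (a + b)² + (M - w) (a - b)² = 2 M (a² + b²) + 4 w a b`
  nlinarith [mul_nonneg (neg_le_iff_add_nonneg.1 hlo) (sq_nonneg (a + b)),
    mul_nonneg (sub_nonneg.2 hhi) (sq_nonneg (a - b)), sq_nonneg a]

theorem deriv_coneEnergy_le (hu : ContDiff ℝ 2 (uncurry u)) (ht : t ≤ R)
    (hpde : ∀ x, |x| ≤ R - t → HyperbolicBurgersAt u t x)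
    (hM : ∀ x, |x| ≤ R - t → |u t x| ≤ M) :
    deriv (coneEnergy u R) t ≤ 2 * M * coneEnergy u R t := by
  rw [(hasDerivAt_coneEnergy hu R t).deriv, integral_partialT_energyDensity hu ht hpde]
  have hu0 := (hu.continuous.uncurry_left t)
  have hT0 := ((hu.uncurry_partialT (m := 0) (by norm_num)).continuous.uncurry_left t)
  have hX0 := ((hu.uncurry_partialX (m := 0) (by norm_num)).continuous.uncurry_left t)
  have hsource : -∫ x in -(R - t)..R - t,
      (2 * partialT u t x ^ 2 + 4 * u t x * partialT u t x * partialX u t x) ≤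
      2 * M * coneEnergy u R t := by
    rw [← intervalIntegral.integral_neg, coneEnergy, ← intervalIntegral.integral_const_mul]
    exact intervalIntegral.integral_mono_on (by linarith)
      ((by fun_prop : Continuous _).intervalIntegrable _ _)
      ((by unfold energyDensity; fun_prop : Continuous _).intervalIntegrable _ _)
      fun x hx => neg_two_mul_sq_add_four_mul_le (hM x (abs_le.2 hx))
  -- the boundary terms are `-(∂ₜu ∓ ∂ₓu)²` at `x = ±(R - t)`
  have hright := sq_nonneg (partialT u t (R - t) - partialX u t (R - t))
  have hleft := sq_nonneg (partialT u t (-(R - t)) + partialX u t (-(R - t)))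
  unfold energyDensity
  linarith

theorem coneEnergy_nonneg (ht : t ≤ R) : 0 ≤ coneEnergy u R t :=
  intervalIntegral.integral_nonneg (by linarith) fun x _ => energyDensity_nonneg t x

theorem coneEnergy_zero_eq_zero (hu : Differentiable ℝ (uncurry u)) (hR : 0 < R)
    (h0 : ∀ x ∈ Icc (-R) R, u 0 x = 0 ∧ partialT u 0 x = 0) : coneEnergy u R 0 = 0 := by
  have hX : ∀ x ∈ Icc (-R) R, partialX u 0 x = 0 := fun x hx =>
    (hasDerivAt_partialX (hu _)).eq_zero_of_eqOn_zero (by linarith) (fun y hy => (h0 y hy).1) hx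
  rw [coneEnergy, sub_zero]
  refine (intervalIntegral.integral_congr fun x hx => ?_).trans intervalIntegral.integral_zero
  rw [uIcc_of_le (by linarith)] at hx
  simp [energyDensity, (h0 x hx).2, hX x hx]

theorem coneEnergy_eq_zero (hu : ContDiff ℝ 2 (uncurry u))
    (hpde : ∀ t x, 0 ≤ t → t ≤ R → |x| ≤ R - t → HyperbolicBurgersAt u t x)
    (h0 : coneEnergy u R 0 = 0) : ∀ t ∈ Icc 0 R, coneEnergy u R t = 0 := by
  obtain ⟨C, hC⟩ := (isCompact_Icc.prod isCompact_Icc :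
    IsCompact (Icc 0 R ×ˢ Icc (-R) R)).exists_bound_of_continuousOn hu.continuous.continuousOn
  have hE := hasDerivAt_coneEnergy hu R
  have hbound : ∀ s ∈ Ico 0 R, deriv (coneEnergy u R) s ≤ 2 * C * coneEnergy u R s := by
    refine fun s ⟨hs0, hsR⟩ => deriv_coneEnergy_le hu hsR.le (hpde s · hs0 hsR.le) fun x hx => ?_
    have hx' := abs_le.1 hx
    simpa using hC (s, x) ⟨⟨hs0, hsR.le⟩, by constructor <;> linarith⟩
  intro t ht
  exact le_antisymm
    (nonpos_of_deriv_right_le_mul_self (fun s _ => (hE s).continuousAt.continuousWithinAt)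
      (fun s _ => ((hE s).deriv ▸ hE s).hasDerivWithinAt) h0.le hbound t ht)
    (coneEnergy_nonneg ht.2)

theorem partialT_eq_zero_of_coneEnergy_eq_zero (hu : ContDiff ℝ 1 (uncurry u)) {x : ℝ}
    (ht : t < R) (hE : coneEnergy u R t = 0) (hx : |x| ≤ R - t) : partialT u t x = 0 := by
  have hT := (hu.uncurry_partialT (m := 0) le_rfl).continuous.uncurry_left t
  have hX := (hu.uncurry_partialX (m := 0) le_rfl).continuous.uncurry_left t
  have hρ := intervalIntegral.eq_zero_of_integral_eq_zero (by linarith)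
    (by unfold energyDensity; fun_prop) (fun x _ => energyDensity_nonneg t x) hE x (abs_le.1 hx)
  unfold energyDensity at hρ
  exact pow_eq_zero_iff two_ne_zero |>.1 (by nlinarith [sq_nonneg (partialX u t x)])

theorem eq_zero_on_cone (hu : ContDiff ℝ 1 (uncurry u)) (h0 : ∀ x ∈ Icc (-R) R, u 0 x = 0)
    (hT : ∀ s y, 0 ≤ s → s < R → |y| ≤ R - s → partialT u s y = 0) :
    ∀ t x, 0 ≤ t → t ≤ R → |x| ≤ R - t → u t x = 0 := by
  intro t x ht0 htR hx
  have hdiff := hu.differentiable_one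
  have hconst := constant_of_has_deriv_right_zero (f := fun s => u s x) (a := 0) (b := t)
    (hu.continuous.uncurry_right x).continuousOn
    (fun s hs => hT s x hs.1 (by linarith [hs.2]) (by linarith [hs.2]) ▸
      (hasDerivAt_partialT (hdiff _)).hasDerivWithinAt) t ⟨ht0, le_rfl⟩
  rw [hconst]
  exact h0 x (abs_le.1 (by linarith))

end HyperbolicBurgers

/-- Finite propagation speed for the hyperbolic Burgers equation
`∂ₜ²u + ∂ₜu + 2u ∂ₓu = ∂ₓ²u` on the backward light cone: the cone energy
satisfies `e'(t) ≤ 2‖u(t)‖_{L^∞} e(t)`, and zero initial data on `[-R,R]`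
forces `u ≡ 0` in the cone. -/
theorem stmt5 (R : ℝ) (hR : 0 < R) (u : ℝ → ℝ → ℝ)
    (hu : ContDiff ℝ 2 (Function.uncurry u))
    (hpde : ∀ t x : ℝ, 0 ≤ t → t ≤ R → |x| ≤ R - t →
      deriv (deriv (fun s => u s x)) t + deriv (fun s => u s x) t +
          2 * u t x * deriv (fun y => u t y) x =
        deriv (deriv (fun y => u t y)) x)
    (e : ℝ → ℝ)
    (he : e = fun t => ∫ x in Set.Icc (-(R - t)) (R - t),
      ((deriv (fun s => u s x) t) ^ 2 + (deriv (fun y => u t y) x) ^ 2)) :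
    (∀ t ∈ Set.Ico (0 : ℝ) R,
        deriv e t ≤ 2 * sSup ((fun x => |u t x|) '' Set.Icc (-(R - t)) (R - t)) * e t) ∧
      ((∀ x ∈ Set.Icc (-R) R, u 0 x = 0 ∧ deriv (fun s => u s x) 0 = 0) →
        ∀ t x : ℝ, 0 ≤ t → t ≤ R → |x| ≤ R - t → u t x = 0) := by
  have he_cone : ∀ t ≤ R, e t = coneEnergy u R t := fun t ht => by
    rw [he, coneEnergy, intervalIntegral.integral_of_le (by linarith),
      ← integral_Icc_eq_integral_Ioc]
    rfl
  refine ⟨fun t ⟨ht0, htR⟩ => ?_, fun h0 => ?_⟩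
  · have hbdd : BddAbove ((fun x => |u t x|) '' Icc (-(R - t)) (R - t)) :=
      (isCompact_Icc.image (hu.continuous.uncurry_left t).abs).bddAbove
    have h_eventually : e =ᶠ[𝓝 t] coneEnergy u R :=
      eventually_lt_nhds htR |>.mono fun s hs => he_cone s hs.le
    rw [h_eventually.deriv_eq, he_cone t htR.le]
    exact deriv_coneEnergy_le hu htR.le (hpde t · ht0 htR.le)
      fun x hx => le_csSup hbdd ⟨x, abs_le.1 hx, rfl⟩
  · have hu1 : ContDiff ℝ 1 (uncurry u) := hu.of_le one_le_two
    have hE := coneEnergy_eq_zero hu hpde (coneEnergy_zero_eq_zero hu1.differentiable_one hR h0)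
    exact eq_zero_on_cone hu1 (fun x hx => (h0 x hx).1) fun s y hs hsR hy =>
      partialT_eq_zero_of_coneEnergy_eq_zero hu1 hsR (hE s ⟨hs, hsR.le⟩) hy
end
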